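/- Let r ∈ F(q) satisfy r(q) + r(q⁻¹) = 0, where r(q⁻¹) is the image of r under the automorphism q ↦ q⁻¹ of F(q). Then the operator of multiplication by r on K is anti-self-adjoint for the loop-space form: Ω(r·f, g) + Ω(f, r·g) = 0 for all f, g ∈ K. In particular, if char F ≠ 2, this holds for r(q) = 1/(1−q) − 1/2, so the string vector field f ↦ f/(1−q) − f/2 is infinitesimally symplectic. -/

import Mathlib

open Polynomial in
theorem algebraMap_ratFunc_eq_aeval (F : Type*) [Field F] (p : F[X]) :
    algebraMap F[X] (RatFunc F) p = Polynomial.aeval RatFunc.X p := by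
  have h : (IsScalarTower.toAlgHom F F[X] (RatFunc F)) = Polynomial.aeval (RatFunc.X (K := F)) :=
    Polynomial.algHom_ext (by simp [RatFunc.algebraMap_X])
  exact DFunLike.congr_fun h p

open Polynomial in
/-- Injectivity of `aeval X⁻¹ : F[X] → F(q)`. -/
theorem aeval_inv_injective (F : Type*) [Field F] :
    Function.Injective (Polynomial.aeval (RatFunc.X (K := F))⁻¹ : F[X] →ₐ[F] RatFunc F) := by
  rw [injective_iff_map_eq_zero]
  intro p hp
  haveI : Invertible (RatFunc.X (K := F))⁻¹ :=
    invertibleOfNonzero (inv_ne_zero RatFunc.X_ne_zero)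
  have h2 : (⅟(RatFunc.X (K := F))⁻¹) = RatFunc.X := by
    rw [invOf_eq_inv, inv_inv]
  have hp' : Polynomial.eval₂ (algebraMap F (RatFunc F)) (RatFunc.X)⁻¹ p = 0 := by
    rwa [Polynomial.aeval_def] at hp
  rw [← Polynomial.eval₂_reverse_eq_zero_iff (algebraMap F (RatFunc F)) (RatFunc.X)⁻¹ p] at hp'
  rw [h2] at hp'
  have h3 : algebraMap F[X] (RatFunc F) p.reverse = 0 := by
    rw [algebraMap_ratFunc_eq_aeval, Polynomial.aeval_def]
    exact hp'
  have h4 : p.reverse = 0 := RatFunc.algebraMap_injective F (by simpa using h3)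
  exact Polynomial.reverse_eq_zero.mp h4

noncomputable section

open scoped TensorProduct

variable (F : Type*) [Field F]

/-- The automorphism `q ↦ q⁻¹` of `F(q)`: the unique `F`-algebra map sending `q` to `q⁻¹`. -/
def qinv : RatFunc F →ₐ[F] RatFunc F :=
  IsFractionRing.liftAlgHom (aeval_inv_injective F)

/-- Coefficient of `qⁿ` in the Laurent-series expansion at `q = 0`, as an `F`-linear map. -/
def coeffL (n : ℤ) : RatFunc F →ₗ[F] F where
  toFun h := ((h : LaurentSeries F)).coeff n
  map_add' a b := by
    rw [map_add, HahnSeries.coeff_add]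
  map_smul' c a := by
    rw [RingHom.id_apply, Algebra.smul_def, map_mul, smul_eq_mul,
      IsScalarTower.algebraMap_apply F (Polynomial F) (RatFunc F), Polynomial.algebraMap_apply]
    erw [← RatFunc.coe_coe]
    rw [Polynomial.coe_C, Algebra.algebraMap_self, RingHom.id_apply, PowerSeries.coe_C,
      HahnSeries.C_mul_eq_smul, HahnSeries.coeff_smul, smul_eq_mul]

/-- `Res_{q=0} (h dq)`: the coefficient of `q⁻¹` in the Laurent expansion of `h` at `q = 0`. -/
def res0 (h : RatFunc F) : F := coeffL F (-1) h

/-- `Res_{q=∞} (h dq) := −Res_{q=0} (q⁻² h(q⁻¹) dq)`. -/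
def resInf (h : RatFunc F) : F := - res0 F ((RatFunc.X)⁻¹ ^ 2 * qinv F h)

variable (V : Type*) [AddCommGroup V] [Module F V]

/-- The loop space `K := F(q) ⊗_F V` of `V`-valued rational functions. -/
abbrev LoopK := RatFunc F ⊗[F] V

/-- `f(q) ↦ f(q⁻¹)` on `K`. -/
def finv : LoopK F V →ₗ[F] LoopK F V := LinearMap.rTensor V (qinv F).toLinearMap

/-- The `V`-valued coefficient of `qⁿ` in the expansion at `q = 0` of an element of `K`. -/
def vcoeff (n : ℤ) : LoopK F V →ₗ[F] V :=
  (TensorProduct.lid F V).toLinearMap ∘ₗ LinearMap.rTensor V (coeffL F n)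

/-- The loop-space form
`Ω(f,g) = −Res_{q=0}(q⁻¹ B_q(f(q⁻¹),g(q)) dq) − Res_{q=∞}(q⁻¹ B_q(f(q⁻¹),g(q)) dq)`. -/
def Omega (B : LinearMap.BilinForm F V) (f g : LoopK F V) : F :=
  - res0 F ((RatFunc.X)⁻¹ * (LinearMap.BilinForm.baseChange (RatFunc F) B) (finv F V f) g)
  - resInf F ((RatFunc.X)⁻¹ * (LinearMap.BilinForm.baseChange (RatFunc F) B) (finv F V f) g)

/-- `K₊`: `V`-valued Laurent polynomials in `q`. -/
def Kplus : Submodule F (LoopK F V) :=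
  Submodule.span F {z : LoopK F V | ∃ (n : ℤ) (v : V), z = (RatFunc.X ^ n) ⊗ₜ[F] v}

/-- `K₋`: `V`-valued rational functions regular at `q = 0` and vanishing at `q = ∞`. -/
def Kminus : Submodule F (LoopK F V) where
  carrier := {f | (∀ n : ℤ, n < 0 → vcoeff F V n f = 0) ∧
    (∀ n : ℤ, n ≤ 0 → vcoeff F V n (finv F V f) = 0)}
  add_mem' := by
    rintro a b ⟨ha1, ha2⟩ ⟨hb1, hb2⟩
    constructor
    · intro n hn; rw [map_add, ha1 n hn, hb1 n hn, add_zero]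
    · intro n hn; rw [map_add, map_add, ha2 n hn, hb2 n hn, add_zero]
  zero_mem' := by
    constructor <;> intro n hn <;> simp
  smul_mem' := by
    rintro c a ⟨ha1, ha2⟩
    constructor
    · intro n hn; rw [map_smul, ha1 n hn, smul_zero]
    · intro n hn; rw [map_smul, map_smul, ha2 n hn, smul_zero]

/-- The value at `q = 1` of a `V`-valued Laurent polynomial (the sum of its coefficients). -/
def evalOne (f : LoopK F V) : V := ∑ᶠ n : ℤ, vcoeff F V n f

/-- Scalar `K₊ ⊂ F(q)`: the Laurent polynomials. -/
def KplusS : Submodule F (RatFunc F) :=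
  Submodule.span F (Set.range fun n : ℤ => (RatFunc.X : RatFunc F) ^ n)

/-- Scalar `K₋ ⊂ F(q)`: rational functions regular at `q = 0` and vanishing at `q = ∞`. -/
def KminusS : Submodule F (RatFunc F) where
  carrier := {h | (∀ n : ℤ, n < 0 → coeffL F n h = 0) ∧
    (∀ n : ℤ, n ≤ 0 → coeffL F n (qinv F h) = 0)}
  add_mem' := by
    rintro a b ⟨ha1, ha2⟩ ⟨hb1, hb2⟩
    constructor
    · intro n hn; rw [map_add, ha1 n hn, hb1 n hn, add_zero]
    · intro n hn; rw [map_add, map_add, ha2 n hn, hb2 n hn, add_zero]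
  zero_mem' := by
    constructor <;> intro n hn <;> simp
  smul_mem' := by
    rintro c a ⟨ha1, ha2⟩
    constructor
    · intro n hn; rw [map_smul, ha1 n hn, smul_zero]
    · intro n hn; rw [map_smul, map_smul, ha2 n hn, smul_zero]

/-! The adjoint of multiplication by `r` for `Ω` is multiplication by `r(q⁻¹)`: `f ↦ f(q⁻¹)` is
semilinear over `q ↦ q⁻¹` and `B_q` is `F(q)`-bilinear, so `r` moves from the first argument of
`Ω` to the second as `r(q⁻¹)`. For `r = 1/(1-q) - 1/2` the condition `r + r(q⁻¹) = 0` is the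
identity `1/(1-q) + 1/(1-q⁻¹) = 1`. -/

theorem AlgHom.rTensor_toLinearMap_smul {R A B M : Type*} [CommSemiring R] [CommSemiring A]
    [CommSemiring B] [Algebra R A] [Algebra R B] [AddCommMonoid M] [Module R M]
    (φ : A →ₐ[R] B) (a : A) (x : A ⊗[R] M) :
    φ.toLinearMap.rTensor M (a • x) = φ a • φ.toLinearMap.rTensor M x := by
  induction x using TensorProduct.induction_on with
  | zero => simp
  | tmul b m => simp [TensorProduct.smul_tmul']
  | add x y hx hy => rw [smul_add, map_add, map_add, hx, hy, smul_add]

theorem qinv_X : qinv F RatFunc.X = (RatFunc.X : RatFunc F)⁻¹ := by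
  conv_lhs => rw [← RatFunc.algebraMap_X]
  exact (IsFractionRing.lift_algebraMap (aeval_inv_injective F) _).trans (Polynomial.aeval_X _)

theorem finv_smul (r : RatFunc F) (f : LoopK F V) :
    finv F V (r • f) = qinv F r • finv F V f :=
  (qinv F).rTensor_toLinearMap_smul r f

section Omega

variable {F V} (B : LinearMap.BilinForm F V)

theorem Omega_smul_left (r : RatFunc F) (f g : LoopK F V) :
    Omega F V B (r • f) g = Omega F V B f (qinv F r • g) := by
  simp only [Omega, finv_smul, map_smul, LinearMap.smul_apply]

theorem Omega_add_right (f g g' : LoopK F V) :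
    Omega F V B f (g + g') = Omega F V B f g + Omega F V B f g' := by
  simp only [Omega, resInf, res0, map_add, mul_add]
  ring

theorem Omega_zero_right (f : LoopK F V) : Omega F V B f 0 = 0 := by
  simp [Omega, resInf, res0]

end Omega

theorem inv_one_sub_add_inv_one_sub_inv {K : Type*} [Field K] {x : K} (hx₀ : x ≠ 0)
    (hx₁ : x ≠ 1) : (1 - x)⁻¹ + (1 - x⁻¹)⁻¹ = 1 := by
  have : 1 - x ≠ 0 := sub_ne_zero.mpr hx₁.symm
  field_simp
  ring

open Polynomial in
theorem RatFunc.X_ne_one {K : Type*} [CommRing K] [IsDomain K] : (RatFunc.X : RatFunc K) ≠ 1 := by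
  rw [← RatFunc.algebraMap_X, ← map_one (algebraMap K[X] (RatFunc K)), ← Polynomial.C_1]
  exact (RatFunc.algebraMap_injective K).ne (Polynomial.X_ne_C 1)

theorem mul_antiselfadjoint (B : LinearMap.BilinForm F V) :
    (∀ r : RatFunc F, r + qinv F r = 0 →
      ∀ f g : LoopK F V, Omega F V B (r • f) g + Omega F V B f (r • g) = 0) ∧
    (ringChar F ≠ 2 →
      ((1 - RatFunc.X : RatFunc F)⁻¹ - 2⁻¹) + qinv F ((1 - RatFunc.X : RatFunc F)⁻¹ - 2⁻¹) = 0) := by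
  refine ⟨fun r hr f g => ?_, fun hchar => ?_⟩
  · rw [Omega_smul_left, ← Omega_add_right, ← add_smul, add_comm, hr, zero_smul,
      Omega_zero_right]
  · have h2 : (2 : RatFunc F) ≠ 0 := by
      simpa only [map_ofNat] using
        (map_ne_zero (algebraMap F (RatFunc F))).mpr (Ring.two_ne_zero hchar)
    have hsum := inv_one_sub_add_inv_one_sub_inv (RatFunc.X_ne_zero (K := F)) RatFunc.X_ne_one
    rw [map_sub, map_inv₀, map_sub, map_one, qinv_X, map_inv₀, map_ofNat]
    linear_combination hsum - inv_mul_cancel₀ h2
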